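/- Let I ⊂ ℝ be an open interval, d, m ≥ 1. Assume: for some α ∈ (0,1), q_{ij} and the entries of B_i belong to C^{α/2,1+α}_loc(I×ℝ^d) and the entries of C belong to C^{α/2,α}_loc(I×ℝ^d); Q, B_i and C are symmetric; and ν₀ := inf_{I×ℝ^d} λ_Q > 0. Suppose there exist a function h : I×ℝ^d → ℝ bounded from above by a constant h₀ such that: (a) for every η ∈ ℝ^m with |η| = 1, 𝒦_η + 4h ≥ 0 on I×ℝ^d, where 𝒦_η = ∑_{i,j=1}^d (Q^{-1})_{ij} [⟨B_i η, η⟩⟨B_j η, η⟩ − ⟨B_i η, B_j η⟩] − 4⟨Cη, η⟩; and (b) for every bounded interval [s,T] ⊂ I there exist λ ∈ ℝ and a positive function φ ∈ C²(ℝ^d) with φ(x) → +∞ as |x| → +∞ and sup_{|η|=1} sup_{[s,T]×ℝ^d} (𝒜_η φ + 2hφ − λφ) < +∞, where 𝒜_η = div(Q D_x) + ⟨b_η, D_x⟩ and (b_η)_i = ⟨B_i η, η⟩. Then for every s ∈ I, T > s in I and f ∈ C_b(ℝ^d;ℝ^m), every bounded classical solution u of D_t u = 𝓐(t)u on (s,T]×ℝ^d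 with u(s,·) = f satisfies ‖u(t,·)‖_∞ ≤ e^{h₀(t−s)} ‖f‖_∞ for every t ∈ (s,T]. -/

import Mathlib

open MeasureTheory Set Filter Topology
open scoped BigOperators Matrix

/-- Partial derivative in the `i`-th coordinate direction. -/
noncomputable def pd {d : ℕ} {F : Type*} [NormedAddCommGroup F] [NormedSpace ℝ F]
    (f : EuclideanSpace ℝ (Fin d) → F) (x : EuclideanSpace ℝ (Fin d)) (i : Fin d) : F :=
  fderiv ℝ f x (EuclideanSpace.single i 1)

/-- `lam` is the minimum eigenvalue of the symmetric matrix `M` (via the Rayleigh quotient). -/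
def IsMinEigen {n : ℕ} (M : Matrix (Fin n) (Fin n) ℝ) (lam : ℝ) : Prop :=
  (∀ w : Fin n → ℝ, lam * ∑ k, (w k) ^ 2 ≤ ∑ k, ∑ l, M k l * w k * w l) ∧
    ∃ w : Fin n → ℝ, w ≠ 0 ∧ (∑ k, ∑ l, M k l * w k * w l) = lam * ∑ k, (w k) ^ 2

/-- Local parabolic Hölder continuity of exponent `α/2` in time and `α` in space,
on `I × ℝ^d`. -/
def HolderLocPar (d : ℕ) (α : ℝ) (I : Set ℝ)
    (f : ℝ → EuclideanSpace ℝ (Fin d) → ℝ) : Prop :=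
  ∀ K : Set (ℝ × EuclideanSpace ℝ (Fin d)), IsCompact K → (∀ pt ∈ K, pt.1 ∈ I) →
    ∃ c : ℝ, ∀ pt ∈ K, ∀ qt ∈ K,
      |f pt.1 pt.2 - f qt.1 qt.2| ≤ c * (|pt.1 - qt.1| ^ (α / 2) + ‖pt.2 - qt.2‖ ^ α)

/-- Membership in `C^{α/2,1+α}_loc(I×ℝ^d)`: the function and its first-order spatial
derivatives are locally parabolic `α`-Hölder continuous. -/
def Cpar1 (d : ℕ) (α : ℝ) (I : Set ℝ)
    (f : ℝ → EuclideanSpace ℝ (Fin d) → ℝ) : Prop :=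
  HolderLocPar d α I f ∧ (∀ t ∈ I, Differentiable ℝ (f t)) ∧
    ∀ i : Fin d, HolderLocPar d α I (fun t x => pd (f t) x i)

section pdlemmas
variable {d : ℕ} {f g : EuclideanSpace ℝ (Fin d) → ℝ} {x : EuclideanSpace ℝ (Fin d)} {i : Fin d}

lemma pd_mul (hf : DifferentiableAt ℝ f x) (hg : DifferentiableAt ℝ g x) :
    pd (fun y => f y * g y) x i = pd f x i * g x + f x * pd g x i := by
  simp only [pd, fderiv_fun_mul hf hg, ContinuousLinearMap.add_apply, ContinuousLinearMap.smul_apply,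
    smul_eq_mul]
  ring

lemma pd_sub (hf : DifferentiableAt ℝ f x) (hg : DifferentiableAt ℝ g x) :
    pd (fun y => f y - g y) x i = pd f x i - pd g x i := by
  simp [pd, fderiv_fun_sub hf hg]

lemma pd_const_mul (hf : DifferentiableAt ℝ f x) (c : ℝ) :
    pd (fun y => c * f y) x i = c * pd f x i := by
  simp [pd, fderiv_const_mul hf c]

lemma pd_sum {ι : Type*} (s : Finset ι) (F : ι → EuclideanSpace ℝ (Fin d) → ℝ)
    (hf : ∀ k ∈ s, DifferentiableAt ℝ (F k) x) :
    pd (fun y => ∑ k ∈ s, F k y) x i = ∑ k ∈ s, pd (F k) x i := by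
  simp [pd, fderiv_fun_sum hf]

lemma pd_sq (hf : DifferentiableAt ℝ f x) :
    pd (fun y => f y ^ 2) x i = 2 * f x * pd f x i := by
  have : (fun y => f y ^ 2) = fun y => f y * f y := by funext y; ring
  rw [this, pd_mul hf hf]; ring

lemma diff_pd (hf : ContDiff ℝ 2 f) (j : Fin d) : Differentiable ℝ (fun y => pd f y j) := by
  show Differentiable ℝ (fun y => fderiv ℝ f y (EuclideanSpace.single j 1))
  exact ((hf.fderiv_right (m := 1) (le_refl 2)).differentiable one_ne_zero).clm_apply
    (differentiable_const _)

end pdlemmas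

lemma pos_right_of_hasDerivAt {G : ℝ → ℝ} {κ : ℝ} (hG : HasDerivAt G κ 0) (h0 : G 0 = 0)
    (hκ : 0 < κ) : ∃ δ > 0, ∀ t ∈ Ioo (0:ℝ) δ, 0 < G t := by
  have hs := hasDerivAt_iff_tendsto_slope.1 hG
  have hev : ∀ᶠ t in 𝓝[≠] (0:ℝ), 0 < slope G 0 t := hs (Ioi_mem_nhds hκ)
  have hev' : ∀ᶠ t in 𝓝 (0:ℝ), t ≠ 0 → 0 < slope G 0 t := eventually_nhdsWithin_iff.1 hev
  rcases Metric.eventually_nhds_iff.1 hev' with ⟨δ, hδ, hball⟩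
  refine ⟨δ, hδ, fun t ht => ?_⟩
  have hne : t ≠ 0 := ne_of_gt ht.1
  have : 0 < slope G 0 t := by
    apply hball (by simpa [abs_of_pos ht.1, Real.dist_eq] using ht.2) hne
  rw [slope_def_field] at this
  have := mul_pos this ht.1
  simp only [h0, sub_zero] at this
  rw [div_mul_cancel₀ _ hne] at this
  exact this

lemma dir_second_nonpos {d : ℕ} {F : EuclideanSpace ℝ (Fin d) → ℝ} (hF : ContDiff ℝ 2 F)
    {x₀ : EuclideanSpace ℝ (Fin d)} (hmax : IsLocalMax F x₀) (v : EuclideanSpace ℝ (Fin d)) :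
    fderiv ℝ (fun y => fderiv ℝ F y v) x₀ v ≤ 0 := by
  have hd1 : Differentiable ℝ F := hF.differentiable two_ne_zero
  have hfd : ContDiff ℝ 1 (fderiv ℝ F) := hF.fderiv_right (le_refl 2)
  have hGdiff : Differentiable ℝ (fun y => fderiv ℝ F y v) :=
    (hfd.differentiable one_ne_zero).clm_apply (differentiable_const v)
  set L : ℝ → EuclideanSpace ℝ (Fin d) := fun t => x₀ + t • v with hLdef
  have hL : ∀ t : ℝ, HasDerivAt L v t := by
    intro t
    simpa [hLdef] using ((hasDerivAt_id t).smul_const v).const_add x₀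
  have hL0 : L 0 = x₀ := by simp [hLdef]
  set ρ : ℝ → ℝ := fun t => F (L t) with hρdef
  set G : ℝ → ℝ := fun t => fderiv ℝ F (L t) v with hGdef
  have hρ : ∀ t : ℝ, HasDerivAt ρ (G t) t := fun t =>
    (hd1 (L t)).hasFDerivAt.comp_hasDerivAt t (hL t)
  have hκ : HasDerivAt G (fderiv ℝ (fun y => fderiv ℝ F y v) x₀ v) 0 := by
    have := ((hGdiff (L 0)).hasFDerivAt.comp_hasDerivAt 0 (hL 0))
    rwa [hL0] at this
  have hLtend : Tendsto L (𝓝 0) (𝓝 x₀) := by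
    have : Continuous L := by continuity
    simpa [hL0] using this.tendsto 0
  have hρmax : IsLocalMax ρ 0 := by
    have := hLtend.eventually hmax
    simpa [IsLocalMax, IsMaxFilter, hρdef, hL0] using this
  have hG0 : G 0 = 0 := by
    have h1 : deriv ρ 0 = G 0 := (hρ 0).deriv
    rw [← h1, hρmax.deriv_eq_zero]
  by_contra hpos
  push_neg at hpos
  obtain ⟨δ, hδ, hGpos⟩ := pos_right_of_hasDerivAt hκ hG0 hpos
  have hmono : StrictMonoOn ρ (Icc 0 (δ/2)) := by
    apply strictMonoOn_of_deriv_pos (convex_Icc _ _)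
    · exact fun t _ => ((hρ t).differentiableAt).continuousAt.continuousWithinAt
    · intro t ht
      rw [interior_Icc] at ht
      rw [(hρ t).deriv]
      exact hGpos t ⟨ht.1, by linarith [ht.2]⟩
  obtain ⟨δ₂, hδ₂, hballmax⟩ := Metric.eventually_nhds_iff.1 hρmax
  set t : ℝ := min (δ/4) (δ₂/2) with htdef
  have ht0 : 0 < t := by positivity
  have h1 : ρ 0 < ρ t := by
    apply hmono (by constructor <;> [linarith; linarith]) ⟨le_of_lt ht0, ?_⟩ ht0
    calc t ≤ δ/4 := min_le_left _ _
    _ ≤ δ/2 := by linarith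
  have h2 : ρ t ≤ ρ 0 := by
    apply hballmax
    rw [Real.dist_eq, sub_zero, abs_of_pos ht0]
    calc t ≤ δ₂/2 := min_le_right _ _
    _ < δ₂ := by linarith
  linarith

lemma trace_nonpos {d : ℕ} (Q : Matrix (Fin d) (Fin d) ℝ) (hq : Q.PosSemidef)
    {F : EuclideanSpace ℝ (Fin d) → ℝ} (hF : ContDiff ℝ 2 F)
    {x₀ : EuclideanSpace ℝ (Fin d)} (hmax : IsLocalMax F x₀) :
    ∑ i, ∑ j, Q i j * pd (fun y => pd F y j) x₀ i ≤ 0 := by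
  have hfd : ContDiff ℝ 1 (fderiv ℝ F) := hF.fderiv_right (le_refl 2)
  have hfdd : DifferentiableAt ℝ (fderiv ℝ F) x₀ := (hfd.differentiable one_ne_zero) x₀
  set D2 := fderiv ℝ (fderiv ℝ F) x₀ with hD2
  set e : Fin d → EuclideanSpace ℝ (Fin d) := fun i => EuclideanSpace.single i 1 with he
  have key : ∀ v w : EuclideanSpace ℝ (Fin d),
      fderiv ℝ (fun y => fderiv ℝ F y w) x₀ v = D2 v w := by
    intro v w
    rw [fderiv_clm_apply hfdd (differentiableAt_const w)]
    simp [hD2]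
  have hpd : ∀ i j, pd (fun y => pd F y j) x₀ i = D2 (e i) (e j) := by
    intro i j
    show fderiv ℝ (fun y => fderiv ℝ F y (e j)) x₀ (e i) = D2 (e i) (e j)
    exact key (e i) (e j)
  have hneg : ∀ v, D2 v v ≤ 0 := fun v => by
    rw [← key v v]; exact dir_second_nonpos hF hmax v
  have hSex : ∃ S : Matrix (Fin d) (Fin d) ℝ, ∀ i j, Q i j = ∑ k, S i k * S j k := by
    open scoped MatrixOrder Matrix.Norms.L2Operator in
    obtain ⟨B, hB⟩ := CStarAlgebra.nonneg_iff_eq_star_mul_self.mp hq.nonneg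
    refine ⟨B.transpose, fun i j => ?_⟩
    rw [hB, Matrix.star_eq_conjTranspose, Matrix.mul_apply]
    simp [Matrix.conjTranspose_apply]
  obtain ⟨S, hentry⟩ := hSex
  have expand : ∀ k, D2 (∑ i, S i k • e i) (∑ j, S j k • e j)
      = ∑ i, ∑ j, S i k * S j k * D2 (e i) (e j) := by
    intro k
    calc D2 (∑ i, S i k • e i) (∑ j, S j k • e j)
        = ∑ j, ∑ i, S i k * S j k * D2 (e i) (e j) := by
          rw [map_sum]
          refine Finset.sum_congr rfl fun j _ => ?_
          rw [_root_.map_smul, smul_eq_mul, map_sum, ContinuousLinearMap.sum_apply, Finset.mul_sum]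
          refine Finset.sum_congr rfl fun i _ => ?_
          rw [_root_.map_smul, ContinuousLinearMap.smul_apply, smul_eq_mul]
          ring
      _ = ∑ i, ∑ j, S i k * S j k * D2 (e i) (e j) := Finset.sum_comm
  calc ∑ i, ∑ j, Q i j * pd (fun y => pd F y j) x₀ i
      = ∑ i, ∑ j, ∑ k, S i k * S j k * D2 (e i) (e j) := by
        simp only [hpd, hentry, Finset.sum_mul, mul_assoc]
    _ = ∑ i, ∑ k, ∑ j, S i k * S j k * D2 (e i) (e j) :=
        Finset.sum_congr rfl fun i _ => Finset.sum_comm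
    _ = ∑ k, ∑ i, ∑ j, S i k * S j k * D2 (e i) (e j) := Finset.sum_comm
    _ = ∑ k, D2 (∑ i, S i k • e i) (∑ j, S j k • e j) := by
        simp only [expand]
    _ ≤ 0 := Finset.sum_nonpos fun k _ => hneg _

lemma dot_eq_sum {d : ℕ} (Q : Matrix (Fin d) (Fin d) ℝ) (x y : Fin d → ℝ) :
    x ⬝ᵥ (Q *ᵥ y) = ∑ i, ∑ j, Q i j * x i * y j := by
  simp only [dotProduct, Matrix.mulVec, Finset.mul_sum]
  exact Finset.sum_congr rfl fun i _ => Finset.sum_congr rfl fun j _ => by ring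

lemma posDef_of_rayleigh {d : ℕ} {Q : Matrix (Fin d) (Fin d) ℝ} {ν₀ : ℝ} (hν : 0 < ν₀)
    (hsym : Q.IsSymm)
    (hray : ∀ w : Fin d → ℝ, ν₀ * ∑ k, (w k) ^ 2 ≤ ∑ k, ∑ l, Q k l * w k * w l) :
    Q.PosDef := by
  rw [Matrix.posDef_iff_dotProduct_mulVec]
  constructor
  · rw [Matrix.IsHermitian, Matrix.conjTranspose_eq_transpose_of_trivial]
    exact hsym
  · intro x hx
    have h1 : x ⬝ᵥ (Q *ᵥ x) = ∑ k, ∑ l, Q k l * x k * x l := dot_eq_sum Q x x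
    have h2 : 0 < ∑ k, (x k) ^ 2 := by
      have hne : ∃ k, x k ≠ 0 := by
        by_contra hc; push_neg at hc; exact hx (funext hc)
      obtain ⟨k, hk⟩ := hne
      refine Finset.sum_pos' (fun l _ => sq_nonneg _) ⟨k, Finset.mem_univ k, by positivity⟩
    have := hray x
    simp only [star_trivial]
    rw [h1]
    nlinarith

lemma quad_ineq {d : ℕ} {Q : Matrix (Fin d) (Fin d) ℝ} (hsym : Q.IsSymm) (hpd : Q.PosDef)
    (a b : Fin d → ℝ) :
    4 * (∑ i, a i * b i) ≤
      4 * (∑ i, ∑ j, Q i j * a i * a j) + ∑ i, ∑ j, Q⁻¹ i j * b i * b j := by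
  have hdet : IsUnit Q.det := hpd.det_pos.ne'.isUnit
  have hQQ : Q * Q⁻¹ = 1 := Matrix.mul_nonsing_inv Q hdet
  set c := Q⁻¹ *ᵥ b with hc
  have hQc : Q *ᵥ c = b := by rw [hc, Matrix.mulVec_mulVec, hQQ, Matrix.one_mulVec]
  set z := (2:ℝ) • a - c with hz
  have h0 : 0 ≤ z ⬝ᵥ (Q *ᵥ z) := by
    have := hpd.posSemidef.dotProduct_mulVec_nonneg z
    simpa using this
  have hcQa : c ⬝ᵥ (Q *ᵥ a) = b ⬝ᵥ a := by
    rw [Matrix.dotProduct_mulVec]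
    have : c ᵥ* Q = b := by
      nth_rewrite 1 [← hsym]
      rw [Matrix.vecMul_transpose, hQc]
    rw [this]
  have hexp : z ⬝ᵥ (Q *ᵥ z) =
      4 * (a ⬝ᵥ (Q *ᵥ a)) - 2 * (a ⬝ᵥ b) - 2 * (b ⬝ᵥ a) + c ⬝ᵥ b := by
    rw [hz, Matrix.mulVec_sub, Matrix.mulVec_smul]
    rw [sub_dotProduct, smul_dotProduct]
    rw [dotProduct_sub, dotProduct_sub, dotProduct_smul, hQc]
    rw [dotProduct_smul, hcQa]
    simp only [smul_eq_mul]
    ring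
  have hab : a ⬝ᵥ b = ∑ i, a i * b i := rfl
  have hba : b ⬝ᵥ a = ∑ i, a i * b i := by
    rw [dotProduct_comm]; rfl
  have hcb : c ⬝ᵥ b = ∑ i, ∑ j, Q⁻¹ i j * b i * b j := by
    rw [hc, dotProduct_comm, dot_eq_sum]
  have haQa : a ⬝ᵥ (Q *ᵥ a) = ∑ i, ∑ j, Q i j * a i * a j := dot_eq_sum Q a a
  rw [hexp, hab, hba, hcb, haQa] at h0
  linarith

lemma deriv_nonneg_of_isMaxOn {G : ℝ → ℝ} {G' s T t₀ : ℝ} (hs : s < t₀) (hT : t₀ ≤ T)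
    (hG : HasDerivWithinAt G G' (Ioc s T) t₀) (hmax : ∀ τ ∈ Icc s T, G τ ≤ G t₀) : 0 ≤ G' := by
  have hsub : Ioo s t₀ ⊆ Ioc s T := fun y hy => ⟨hy.1, le_trans hy.2.le hT⟩
  have hmono : HasDerivWithinAt G G' (Ioo s t₀) t₀ := hG.mono hsub
  rw [hasDerivWithinAt_iff_tendsto_slope] at hmono
  have hdiff : Ioo s t₀ \ {t₀} = Ioo s t₀ := diff_singleton_eq_self (by simp)
  rw [hdiff] at hmono
  have hne : (𝓝[Ioo s t₀] t₀).NeBot := by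
    apply mem_closure_iff_nhdsWithin_neBot.1
    rw [closure_Ioo hs.ne]
    exact ⟨hs.le, le_rfl⟩
  refine ge_of_tendsto hmono ?_
  filter_upwards [self_mem_nhdsWithin] with τ hτ
  rw [slope_def_field]
  apply div_nonneg_of_nonpos
  · have : G τ ≤ G t₀ := hmax τ ⟨hτ.1.le, le_trans hτ.2.le hT⟩
    linarith
  · linarith [hτ.2]

lemma exists_max_aux {d : ℕ} (s T : ℝ) (hsT : s < T) (g : ℝ × EuclideanSpace ℝ (Fin d) → ℝ)
    (hg : ContinuousOn g (Icc s T ×ˢ (univ : Set (EuclideanSpace ℝ (Fin d)))))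
    (φ : EuclideanSpace ℝ (Fin d) → ℝ) (hφcont : Continuous φ)
    (hφtend : Tendsto φ (cocompact (EuclideanSpace ℝ (Fin d))) atTop)
    (Cb : ℝ) (hbound : ∀ p ∈ Icc s T ×ˢ (univ : Set (EuclideanSpace ℝ (Fin d))), g p ≤ Cb - φ p.2) :
    ∃ p₀ ∈ Icc s T ×ˢ (univ : Set (EuclideanSpace ℝ (Fin d))),
      ∀ p ∈ Icc s T ×ˢ (univ : Set (EuclideanSpace ℝ (Fin d))), g p ≤ g p₀ := by
  set S := Icc s T ×ˢ (univ : Set (EuclideanSpace ℝ (Fin d))) with hSdef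
  have hp₀S : ((s, 0) : ℝ × EuclideanSpace ℝ (Fin d)) ∈ S := by
    simp [hSdef, hsT.le]
  set R := g (s, 0) with hR
  have hK₀ : IsCompact {x : EuclideanSpace ℝ (Fin d) | φ x ≤ Cb - R} := by
    have hev : ∀ᶠ x in cocompact (EuclideanSpace ℝ (Fin d)), Cb - R < φ x :=
      hφtend.eventually_gt_atTop _
    rw [Filter.eventually_iff, mem_cocompact] at hev
    obtain ⟨K, hKc, hKsub⟩ := hev
    apply hKc.of_isClosed_subset (isClosed_le hφcont continuous_const)
    intro x hx
    by_contra hxK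
    exact absurd (hKsub hxK) (by simpa using hx)
  have hSclosed : IsClosed S := (isClosed_Icc).prod isClosed_univ
  set S' := S ∩ g ⁻¹' (Ici R) with hS'
  have hS'closed : IsClosed S' := hg.preimage_isClosed_of_isClosed hSclosed isClosed_Ici
  have hS'sub : S' ⊆ Icc s T ×ˢ {x | φ x ≤ Cb - R} := by
    rintro ⟨t, x⟩ ⟨hpS, hpR⟩
    refine ⟨hpS.1, ?_⟩
    have h1 : g (t, x) ≤ Cb - φ x := hbound _ hpS
    have h2 : R ≤ g (t, x) := hpR
    simp only [mem_setOf_eq]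
    linarith
  have hS'cpt : IsCompact S' := (isCompact_Icc.prod hK₀).of_isClosed_subset hS'closed hS'sub
  have hS'ne : S'.Nonempty :=
    ⟨(s, 0), hp₀S, Set.mem_preimage.2 (by simp only [mem_Ici, hR]; exact le_rfl)⟩
  obtain ⟨p₁, hp₁S', hp₁max⟩ := hS'cpt.exists_isMaxOn hS'ne
    (hg.mono (fun p hp => hp.1))
  refine ⟨p₁, hp₁S'.1, fun p hp => ?_⟩
  by_cases hc : R ≤ g p
  · exact hp₁max ⟨hp, hc⟩
  · push_neg at hc
    have : R ≤ g p₁ := hp₁max ⟨hp₀S, Set.mem_preimage.2 (by simp only [mem_Ici, hR]; exact le_rfl)⟩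
    linarith
lemma keta_core {d m : ℕ} (Q : Matrix (Fin d) (Fin d) ℝ) (hsym : Q.IsSymm) (hpd : Q.PosDef)
    (v BU : Fin d → Fin m → ℝ) (U : Fin m → ℝ) (w₀ : ℝ)
    (hw₀ : w₀ = ∑ k, (U k)^2) (hw₀pos : 0 < w₀)
    (PC H : ℝ)
    (hK : 0 ≤ (∑ i, ∑ j, Q⁻¹ i j *
        ((∑ k, BU i k * U k)/w₀ * ((∑ k, BU j k * U k)/w₀)
          - (∑ k, BU i k * BU j k)/w₀)) - 4*(PC/w₀) + 4*H) :
    2*(∑ i, ∑ k, v i k * BU i k) + 2*PC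
      ≤ 2*(∑ i, ∑ j, Q i j * (∑ k, v i k * v j k))
        + (∑ i, ((∑ k, BU i k * U k)/w₀) * (∑ k, 2 * U k * v i k)) + 2*H*w₀ := by
  have hw₀ne : w₀ ≠ 0 := ne_of_gt hw₀pos
  set ζ : Fin d → Fin m → ℝ := fun i k => BU i k - ((∑ l, BU i l * U l) / w₀) * U k with hζ
  have hqk : ∀ k : Fin m, 4*(∑ i, v i k * ζ i k) ≤
      4*(∑ i, ∑ j, Q i j * v i k * v j k) + ∑ i, ∑ j, Q⁻¹ i j * ζ i k * ζ j k :=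
    fun k => quad_ineq hsym hpd (fun i => v i k) (fun i => ζ i k)
  have hsumk : 4*(∑ k, ∑ i, v i k * ζ i k) ≤
      4*(∑ k, ∑ i, ∑ j, Q i j * v i k * v j k)
        + ∑ k, ∑ i, ∑ j, Q⁻¹ i j * ζ i k * ζ j k := by
    have h := Finset.sum_le_sum (fun k (_ : k ∈ Finset.univ) => hqk k)
    rw [Finset.sum_add_distrib] at h
    rw [Finset.mul_sum, Finset.mul_sum]
    calc ∑ k, 4*(∑ i, v i k * ζ i k) ≤ _ := h
    _ = (∑ k, 4*(∑ i, ∑ j, Q i j * v i k * v j k))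
        + ∑ k, ∑ i, ∑ j, Q⁻¹ i j * ζ i k * ζ j k := rfl
  have hQterm : ∑ k, ∑ i, ∑ j, Q i j * v i k * v j k
      = ∑ i, ∑ j, Q i j * (∑ k, v i k * v j k) := by
    rw [Finset.sum_comm]
    refine Finset.sum_congr rfl fun i _ => ?_
    rw [Finset.sum_comm]
    refine Finset.sum_congr rfl fun j _ => ?_
    rw [Finset.mul_sum]
    exact Finset.sum_congr rfl fun k _ => by ring
  have hζζ : ∀ i j, (∑ k, ζ i k * ζ j k)
      = (∑ k, BU i k * BU j k)
        - (∑ k, BU i k * U k) * (∑ k, BU j k * U k) / w₀ := by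
    intro i j
    have expand : ∀ k : Fin m, ζ i k * ζ j k = BU i k * BU j k
        - ((∑ l, BU i l * U l) / w₀) * (BU j k * U k)
        - ((∑ l, BU j l * U l) / w₀) * (BU i k * U k)
        + ((∑ l, BU i l * U l) / w₀) * ((∑ l, BU j l * U l) / w₀) * (U k)^2 := by
      intro k; simp only [hζ]; ring
    rw [Finset.sum_congr rfl fun k _ => expand k]
    rw [Finset.sum_add_distrib, Finset.sum_sub_distrib, Finset.sum_sub_distrib,
      ← Finset.mul_sum, ← Finset.mul_sum, ← Finset.mul_sum, ← hw₀]
    field_simp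
    ring
  have hKter : ∑ i, ∑ j, Q⁻¹ i j *
      ((∑ k, BU i k * BU j k) - (∑ k, BU i k * U k) * (∑ k, BU j k * U k) / w₀)
      ≤ 4*H*w₀ - 4*PC := by
    have key : (∑ i, ∑ j, Q⁻¹ i j *
        ((∑ k, BU i k * U k)/w₀ * ((∑ k, BU j k * U k)/w₀)
          - (∑ k, BU i k * BU j k)/w₀)) * w₀
        = - ∑ i, ∑ j, Q⁻¹ i j *
            ((∑ k, BU i k * BU j k) - (∑ k, BU i k * U k) * (∑ k, BU j k * U k) / w₀) := by
      rw [Finset.sum_mul, ← Finset.sum_neg_distrib]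
      refine Finset.sum_congr rfl fun i _ => ?_
      rw [Finset.sum_mul, ← Finset.sum_neg_distrib]
      refine Finset.sum_congr rfl fun j _ => ?_
      field_simp
      ring
    have hmul := mul_le_mul_of_nonneg_right hK (le_of_lt hw₀pos)
    rw [zero_mul, add_mul, sub_mul, key] at hmul
    have h4 : 4*(PC/w₀)*w₀ = 4*PC := by field_simp
    rw [h4] at hmul
    linarith
  have hζQ : ∑ k, ∑ i, ∑ j, Q⁻¹ i j * ζ i k * ζ j k ≤ 4*H*w₀ - 4*PC := by
    have hswap : ∑ k, ∑ i, ∑ j, Q⁻¹ i j * ζ i k * ζ j k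
        = ∑ i, ∑ j, Q⁻¹ i j * (∑ k, ζ i k * ζ j k) := by
      rw [Finset.sum_comm]
      refine Finset.sum_congr rfl fun i _ => ?_
      rw [Finset.sum_comm]
      refine Finset.sum_congr rfl fun j _ => ?_
      rw [Finset.mul_sum]
      exact Finset.sum_congr rfl fun k _ => by ring
    rw [hswap,
      Finset.sum_congr rfl fun i (_ : i ∈ Finset.univ) =>
        Finset.sum_congr rfl fun j (_ : j ∈ Finset.univ) => by rw [hζζ i j]]
    exact hKter
  have hdecomp : ∑ i, ∑ k, v i k * BU i k
      = (∑ i, ∑ k, v i k * ζ i k)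
        + ∑ i, ((∑ k, BU i k * U k) / w₀) * (∑ k, U k * v i k) := by
    rw [← Finset.sum_add_distrib]
    refine Finset.sum_congr rfl fun i _ => ?_
    rw [Finset.mul_sum, ← Finset.sum_add_distrib]
    refine Finset.sum_congr rfl fun k _ => ?_
    simp only [hζ]
    ring
  have hmid : ∀ i : Fin d, ((∑ k, BU i k * U k)/w₀) * (∑ k, 2 * U k * v i k)
      = 2 * (((∑ k, BU i k * U k) / w₀) * (∑ k, U k * v i k)) := by
    intro i
    have h2 : ∑ k, 2 * U k * v i k = 2 * ∑ k, U k * v i k := by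
      rw [Finset.mul_sum]
      exact Finset.sum_congr rfl fun k _ => by ring
    rw [h2]; ring
  have hswapvz : ∑ k, ∑ i, v i k * ζ i k = ∑ i, ∑ k, v i k * ζ i k := Finset.sum_comm
  rw [Finset.sum_congr rfl fun i (_ : i ∈ Finset.univ) => hmid i]
  rw [hQterm, hswapvz] at hsumk
  rw [hdecomp, ← Finset.mul_sum]
  linarith

lemma final_arith (aa bb w₀ M2 φ₀ c K lam μ H h₀ DQW DQφ BDW BDφ VV T2S T10S : ℝ)
    (haa : 0 < aa) (hbb : 0 < bb) (hφ₀ : 0 < φ₀) (hc : 0 ≤ c) (hM2 : 0 ≤ M2)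
    (hH : H ≤ h₀) (hμ1 : lam - 2*h₀ - μ ≤ -1) (hμc : K ≤ μ * c - 1)
    (e12 : DQW = 2*T2S + 2*VV)
    (e13 : 2*T10S ≤ 2*VV + BDW + 2*H*w₀)
    (e11 : aa*DQW ≤ bb*DQφ)
    (e9 : aa*BDW = bb*BDφ)
    (e14 : DQφ + BDφ + 2*H*φ₀ - lam*φ₀ ≤ K)
    (e15 : 0 ≤ -(2*h₀)*(aa*w₀) + aa*(2*T2S + 2*T10S) - μ*bb*(φ₀+c))
    (e1 : 0 < aa*w₀ - M2 - bb*(φ₀+c)) : False := by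
  have h1 : aa*(2*T10S) ≤ aa*(2*VV + BDW + 2*H*w₀) :=
    mul_le_mul_of_nonneg_left e13 haa.le
  have h2 : aa*(2*T2S) = aa*DQW - 2*(aa*VV) := by rw [e12]; ring
  have h3 : bb*(DQφ + BDφ) ≤ bb*(K + lam*φ₀ - 2*H*φ₀) :=
    mul_le_mul_of_nonneg_left (by linarith) hbb.le
  have h4 : aa*(2*T2S + 2*T10S) ≤ bb*(K + lam*φ₀ - 2*H*φ₀) + 2*H*(aa*w₀) := by
    have expand1 : aa*(2*T2S + 2*T10S) = aa*(2*T2S) + aa*(2*T10S) := by ring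
    have expand2 : aa*(2*VV + BDW + 2*H*w₀) = 2*(aa*VV) + aa*BDW + 2*H*(aa*w₀) := by ring
    have expand3 : bb*(DQφ + BDφ) = bb*DQφ + bb*BDφ := by ring
    linarith [e11, e9]
  have h5 : 0 ≤ (2*H - 2*h₀)*(aa*w₀) + bb*(K + lam*φ₀ - 2*H*φ₀) - μ*bb*(φ₀+c) := by
    linarith
  have hX : (2*H-2*h₀)*(aa*w₀) ≤ (2*H-2*h₀)*(bb*(φ₀+c)) :=
    mul_le_mul_of_nonpos_left (by linarith) (by linarith)
  have h6 : 0 ≤ bb*((lam - 2*h₀ - μ)*φ₀ + K + (2*H-2*h₀-μ)*c) := by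
    have : (2*H-2*h₀)*(bb*(φ₀+c)) + bb*(K + lam*φ₀ - 2*H*φ₀) - μ*bb*(φ₀+c)
        = bb*((lam - 2*h₀ - μ)*φ₀ + K + (2*H-2*h₀-μ)*c) := by ring
    linarith
  have h7 : (lam - 2*h₀ - μ)*φ₀ + K + (2*H-2*h₀-μ)*c < 0 := by
    have hA : (lam - 2*h₀ - μ)*φ₀ ≤ -φ₀ := by nlinarith
    have hB : (2*H-2*h₀)*c ≤ 0 := mul_nonpos_of_nonpos_of_nonneg (by linarith) hc
    nlinarith
  nlinarith [mul_pos hbb (neg_pos.2 h7)]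


set_option maxHeartbeats 2000000 in
/-- Proposition A.1 of the paper: under the stated conditions on
`𝒦_η + 4h` and the Lyapunov functions for `𝒜_η + 2h`, every bounded classical solution of
`D_t u = 𝓐(t)u`, `u(s,·) = f`, satisfies `‖u(t,·)‖_∞ ≤ e^{h₀(t−s)} ‖f‖_∞`. -/
theorem stmt_16 (d m : ℕ) (hd : 1 ≤ d) (hm : 1 ≤ m)
    (I : Set ℝ) (hI_open : IsOpen I) (hI : I.OrdConnected)
    (α : ℝ) (hα : α ∈ Ioo (0:ℝ) 1) (ν₀ : ℝ) (hν₀ : 0 < ν₀)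
    (q : ℝ → EuclideanSpace ℝ (Fin d) → Matrix (Fin d) (Fin d) ℝ)
    (lamQ : ℝ → EuclideanSpace ℝ (Fin d) → ℝ)
    (hq_reg : ∀ i j : Fin d, Cpar1 d α I (fun t x => q t x i j))
    (hq_symm : ∀ t ∈ I, ∀ x, (q t x).IsSymm)
    (hlamQ : ∀ t ∈ I, ∀ x, IsMinEigen (q t x) (lamQ t x) ∧ ν₀ ≤ lamQ t x)
    (B : Fin d → ℝ → EuclideanSpace ℝ (Fin d) → Matrix (Fin m) (Fin m) ℝ)
    (hB_reg : ∀ i : Fin d, ∀ k l : Fin m, Cpar1 d α I (fun t x => B i t x k l))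
    (hB_symm : ∀ i : Fin d, ∀ t ∈ I, ∀ x, (B i t x).IsSymm)
    (C : ℝ → EuclideanSpace ℝ (Fin d) → Matrix (Fin m) (Fin m) ℝ)
    (hC_reg : ∀ k l : Fin m, HolderLocPar d α I (fun t x => C t x k l))
    (hC_symm : ∀ t ∈ I, ∀ x, (C t x).IsSymm)
    (h : ℝ → EuclideanSpace ℝ (Fin d) → ℝ) (h₀ : ℝ)
    (hh₀ : ∀ t ∈ I, ∀ x, h t x ≤ h₀)
    (hKeta : ∀ η : Fin m → ℝ, (∑ k : Fin m, (η k) ^ 2) = 1 → ∀ t ∈ I, ∀ x,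
      0 ≤ (∑ i : Fin d, ∑ j : Fin d, (q t x)⁻¹ i j *
          ((∑ k : Fin m, (∑ l : Fin m, B i t x k l * η l) * η k) *
            (∑ k : Fin m, (∑ l : Fin m, B j t x k l * η l) * η k) -
           ∑ k : Fin m, (∑ l : Fin m, B i t x k l * η l) *
             (∑ l : Fin m, B j t x k l * η l))) -
        4 * (∑ k : Fin m, (∑ l : Fin m, C t x k l * η l) * η k) + 4 * h t x)
    (hLyap : ∀ s T : ℝ, s ∈ I → T ∈ I → s < T →
      ∃ lam : ℝ, ∃ φ : EuclideanSpace ℝ (Fin d) → ℝ,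
        ContDiff ℝ 2 φ ∧ (∀ x, 0 < φ x) ∧
        Tendsto φ (cocompact (EuclideanSpace ℝ (Fin d))) atTop ∧
        ∃ K : ℝ, ∀ η : Fin m → ℝ, (∑ k : Fin m, (η k) ^ 2) = 1 →
          ∀ t ∈ Icc s T, ∀ x,
            ((∑ i : Fin d, ∑ j : Fin d, pd (fun y => q t y i j * pd φ y j) x i) +
              ∑ i : Fin d,
                (∑ k : Fin m, (∑ l : Fin m, B i t x k l * η l) * η k) * pd φ x i) +
              2 * h t x * φ x - lam * φ x ≤ K) :
    ∀ s T : ℝ, s ∈ I → T ∈ I → s < T →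
    ∀ f : EuclideanSpace ℝ (Fin d) → Fin m → ℝ, Continuous f →
    ∀ M : ℝ, (∀ x, Real.sqrt (∑ k : Fin m, (f x k) ^ 2) ≤ M) →
    ∀ u : ℝ → EuclideanSpace ℝ (Fin d) → Fin m → ℝ,
      ContinuousOn (fun pt : ℝ × EuclideanSpace ℝ (Fin d) => u pt.1 pt.2)
        (Icc s T ×ˢ (univ : Set (EuclideanSpace ℝ (Fin d)))) →
      (∃ Mu : ℝ, ∀ t ∈ Icc s T, ∀ x, ∑ k : Fin m, (u t x k) ^ 2 ≤ Mu) →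
      (∀ x, u s x = f x) →
      (∀ t ∈ Ioc s T, ContDiff ℝ 2 (u t)) →
      (∀ t ∈ Ioc s T, ∀ x,
        HasDerivWithinAt (fun τ => u τ x)
          (fun k : Fin m =>
            (∑ i : Fin d, ∑ j : Fin d,
              pd (fun y => q t y i j * pd (fun z => u t z k) y j) x i) +
            (∑ i : Fin d, ∑ l : Fin m, B i t x k l * pd (fun z => u t z l) x i) +
            ∑ l : Fin m, C t x k l * u t x l)
          (Ioc s T) t) →
      ∀ t ∈ Ioc s T, ∀ x,
        Real.sqrt (∑ k : Fin m, (u t x k) ^ 2) ≤ Real.exp (h₀ * (t - s)) * M := by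
  intro s T hs hT hsT f hf M hfM u hu_cont hu_bdd hu_init hu_C2 hu_eq t ht x
  have hIccI : Icc s T ⊆ I := hI.out hs hT
  obtain ⟨lam, φ, hφC2, hφpos, hφtend, K, hKest⟩ := hLyap s T hs hT hsT
  obtain ⟨Mu, hMu⟩ := hu_bdd
  set μ := max (lam - 2*h₀) 0 + 1 with hμdef
  have hμpos : 0 < μ := by
    have := le_max_right (lam - 2*h₀) 0
    simp only [hμdef]; linarith
  have hμ1 : lam - 2*h₀ - μ ≤ -1 := by
    have := le_max_left (lam - 2*h₀) 0
    simp only [hμdef]; linarith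
  set c := (max K 0 + 1)/μ with hcdef
  have hc0 : 0 < c := by
    apply div_pos _ hμpos
    have := le_max_right K 0
    linarith
  have hμc : K ≤ μ * c - 1 := by
    have h1 : μ * c = max K 0 + 1 := by
      rw [hcdef]; field_simp
    have := le_max_left K 0
    linarith
  have hM0 : 0 ≤ M := le_trans (Real.sqrt_nonneg _) (hfM 0)
  -- the central claim
  have main : ∀ ε : ℝ, 0 < ε →
      ∀ p ∈ Icc s T ×ˢ (univ : Set (EuclideanSpace ℝ (Fin d))),
      Real.exp (-(2*h₀)*(p.1-s)) * (∑ k, (u p.1 p.2 k)^2) - M^2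
        - ε * (Real.exp (μ*(p.1-s)) * (φ p.2 + c)) ≤ 0 := by
    intro ε hε
    set g : ℝ × EuclideanSpace ℝ (Fin d) → ℝ := fun p =>
      Real.exp (-(2*h₀)*(p.1-s)) * (∑ k, (u p.1 p.2 k)^2) - M^2
        - ε * (Real.exp (μ*(p.1-s)) * (φ p.2 + c)) with hgdef
    have hg_cont : ContinuousOn g (Icc s T ×ˢ (univ : Set (EuclideanSpace ℝ (Fin d)))) := by
      have h1 : ContinuousOn (fun p : ℝ × EuclideanSpace ℝ (Fin d) => ∑ k, (u p.1 p.2 k)^2)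
          (Icc s T ×ˢ univ) := by
        apply continuousOn_finset_sum
        intro k _
        exact ((continuous_apply k).comp_continuousOn hu_cont).pow 2
      have h2 : Continuous (fun p : ℝ × EuclideanSpace ℝ (Fin d) =>
          Real.exp (-(2*h₀)*(p.1-s))) :=
        Real.continuous_exp.comp (continuous_const.mul (continuous_fst.sub continuous_const))
      have h3 : Continuous (fun p : ℝ × EuclideanSpace ℝ (Fin d) =>
          ε * (Real.exp (μ*(p.1-s)) * (φ p.2 + c))) := by
        apply continuous_const.mul
        exact (Real.continuous_exp.comp
          (continuous_const.mul (continuous_fst.sub continuous_const))).mul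
          ((hφC2.continuous.comp continuous_snd).add continuous_const)
      exact ((h2.continuousOn.mul h1).sub continuousOn_const).sub h3.continuousOn
    have hgbd : ∀ p ∈ Icc s T ×ˢ (univ : Set (EuclideanSpace ℝ (Fin d))),
        g p ≤ (Real.exp ((|2*h₀|) * (T-s)) * max Mu 0 - M^2) - (fun x' => ε * φ x') p.2 := by
      rintro ⟨τ, y⟩ ⟨hτ, -⟩
      have hE1 : Real.exp (-(2*h₀)*(τ-s)) ≤ Real.exp ((|2*h₀|) * (T-s)) := by
        apply Real.exp_le_exp.2
        have k1 : 0 ≤ τ - s := by linarith [hτ.1]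
        have k2 : τ - s ≤ T - s := by linarith [hτ.2]
        have k3 : -(2*h₀) ≤ |2*h₀| := neg_le_abs _
        have k4 : (0:ℝ) ≤ |2*h₀| := abs_nonneg _
        nlinarith
      have hw0 : 0 ≤ ∑ k, (u τ y k)^2 := Finset.sum_nonneg fun _ _ => sq_nonneg _
      have hw1 : ∑ k, (u τ y k)^2 ≤ max Mu 0 := le_trans (hMu τ hτ y) (le_max_left _ _)
      have ht1 : Real.exp (-(2*h₀)*(τ-s)) * (∑ k, (u τ y k)^2)
          ≤ Real.exp ((|2*h₀|) * (T-s)) * max Mu 0 :=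
        mul_le_mul hE1 hw1 hw0 (Real.exp_pos _).le
      have hE2 : 1 ≤ Real.exp (μ*(τ-s)) :=
        Real.one_le_exp (mul_nonneg hμpos.le (by linarith [hτ.1]))
      have ht3 : ε * φ y ≤ ε * (Real.exp (μ*(τ-s)) * (φ y + c)) := by
        have h5 := hφpos y
        have h4 : φ y + c ≤ Real.exp (μ*(τ-s)) * (φ y + c) :=
          le_mul_of_one_le_left (by linarith) hE2
        exact mul_le_mul_of_nonneg_left (by linarith) hε.le
      have hgτ : g (τ, y) = Real.exp (-(2*h₀)*(τ-s)) * (∑ k, (u τ y k)^2) - M^2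
          - ε * (Real.exp (μ*(τ-s)) * (φ y + c)) := rfl
      rw [hgτ]
      dsimp only
      linarith
    obtain ⟨p₁, hp₁S, hp₁max⟩ := exists_max_aux s T hsT g hg_cont
      (fun x' => ε * φ x') (continuous_const.mul hφC2.continuous)
      (hφtend.const_mul_atTop hε) (Real.exp ((|2*h₀|) * (T-s)) * max Mu 0 - M^2) hgbd
    have hfin : g p₁ ≤ 0 := by
      by_contra hgpos
      push_neg at hgpos
      obtain ⟨t₀, x₀⟩ := p₁
      have ht₀Icc : t₀ ∈ Icc s T := hp₁S.1
      have hgsx : ∀ y : EuclideanSpace ℝ (Fin d), g (s, y) < 0 := by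
        intro y
        have hfsq : ∑ k, (f y k)^2 ≤ M^2 := by
          have h1 := hfM y
          have h2 : 0 ≤ ∑ k, (f y k)^2 := Finset.sum_nonneg fun _ _ => sq_nonneg _
          nlinarith [Real.sq_sqrt h2, Real.sqrt_nonneg (∑ k, (f y k)^2)]
        have hgy : g (s, y) = Real.exp (-(2*h₀)*(s-s)) * (∑ k, (u s y k)^2) - M^2
            - ε * (Real.exp (μ*(s-s)) * (φ y + c)) := rfl
        rw [hgy]
        simp only [sub_self, mul_zero, Real.exp_zero, one_mul]
        have huf : ∑ k, (u s y k)^2 = ∑ k, (f y k)^2 :=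
          Finset.sum_congr rfl fun k _ => by rw [hu_init y]
        rw [huf]
        have := hφpos y
        nlinarith [hε, hc0]
      have hts : s < t₀ := by
        rcases eq_or_lt_of_le ht₀Icc.1 with heq | hlt
        · exfalso
          have hy := hgsx x₀
          rw [heq] at hy
          linarith
        · exact hlt
      have ht₀ : t₀ ∈ Ioc s T := ⟨hts, ht₀Icc.2⟩
      have ht₀I : t₀ ∈ I := hIccI ht₀Icc
      set aa := Real.exp (-(2*h₀)*(t₀-s)) with haa
      set bb := ε * Real.exp (μ*(t₀-s)) with hbb
      have haapos : 0 < aa := Real.exp_pos _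
      have hbbpos : 0 < bb := mul_pos hε (Real.exp_pos _)
      have hgp1 : 0 < aa * (∑ k, (u t₀ x₀ k)^2) - M^2 - bb * (φ x₀ + c) := by
        have hgy : g (t₀, x₀) = aa * (∑ k, (u t₀ x₀ k)^2) - M^2
            - ε * (Real.exp (μ*(t₀-s)) * (φ x₀ + c)) := rfl
        rw [hgy] at hgpos
        have hb2 : bb * (φ x₀ + c) = ε * (Real.exp (μ*(t₀-s)) * (φ x₀ + c)) := by
          rw [hbb]; ring
        linarith
      have hw₀pos : 0 < ∑ k, (u t₀ x₀ k)^2 := by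
        by_contra hw
        push_neg at hw
        have h2 : aa * (∑ k, (u t₀ x₀ k)^2) ≤ 0 :=
          mul_nonpos_of_nonneg_of_nonpos haapos.le hw
        nlinarith [mul_pos hbbpos (show 0 < φ x₀ + c by linarith [hφpos x₀, hc0]), sq_nonneg M]
      set sw := Real.sqrt (∑ k, (u t₀ x₀ k)^2) with hswdef
      have hswpos : 0 < sw := Real.sqrt_pos.2 hw₀pos
      have hsw2 : sw * sw = ∑ k, (u t₀ x₀ k)^2 := Real.mul_self_sqrt hw₀pos.le
      have hηunit : ∑ k, (u t₀ x₀ k / sw)^2 = 1 := by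
        simp only [div_pow]
        rw [← Finset.sum_div]
        rw [show sw^2 = ∑ k, (u t₀ x₀ k)^2 by rw [pow_two]; exact hsw2]
        exact div_self (ne_of_gt hw₀pos)
      have hQsym : (q t₀ x₀).IsSymm := hq_symm t₀ ht₀I x₀
      have hQpd : (q t₀ x₀).PosDef := by
        apply posDef_of_rayleigh hν₀ hQsym
        intro w
        have h1 := ((hlamQ t₀ ht₀I x₀).1).1 w
        have h2 := (hlamQ t₀ ht₀I x₀).2
        have h3 : 0 ≤ ∑ k, (w k)^2 := Finset.sum_nonneg fun _ _ => sq_nonneg _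
        nlinarith
      have huC2 : ContDiff ℝ 2 (u t₀) := hu_C2 t₀ ht₀
      have hukC2 : ∀ k, ContDiff ℝ 2 (fun y => u t₀ y k) := fun k => (contDiff_pi.1 huC2) k
      have hukD : ∀ k, Differentiable ℝ (fun y : EuclideanSpace ℝ (Fin d) => u t₀ y k) :=
        fun k => (hukC2 k).differentiable two_ne_zero
      have hpdukD : ∀ k j, Differentiable ℝ (fun y => pd (fun z => u t₀ z k) y j) :=
        fun k j => diff_pd (hukC2 k) j
      have hqD : ∀ i j, Differentiable ℝ (fun y => q t₀ y i j) :=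
        fun i j => (hq_reg i j).2.1 t₀ ht₀I
      have hφD : Differentiable ℝ φ := hφC2.differentiable two_ne_zero
      have hpdφD : ∀ j, Differentiable ℝ (fun y => pd φ y j) := fun j => diff_pd hφC2 j
      have hwfunC2 : ContDiff ℝ 2 (fun y => ∑ k, (u t₀ y k)^2) :=
        ContDiff.sum fun k _ => (hukC2 k).pow 2
      have hwfunD : Differentiable ℝ (fun y => ∑ k, (u t₀ y k)^2) :=
        hwfunC2.differentiable two_ne_zero
      have hpdwD : ∀ j, Differentiable ℝ (fun y => pd (fun z => ∑ k, (u t₀ z k)^2) y j) :=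
        fun j => diff_pd hwfunC2 j
      have hpdw : ∀ (y : EuclideanSpace ℝ (Fin d)) (j : Fin d),
          pd (fun z => ∑ k, (u t₀ z k)^2) y j
            = ∑ k, 2 * u t₀ y k * pd (fun z => u t₀ z k) y j := by
        intro y j
        exact (pd_sum Finset.univ (fun k z => (u t₀ z k)^2) (fun k _ => ((hukD k) y).pow 2)).trans
          (Finset.sum_congr rfl fun k _ => pd_sq ((hukD k) y))
      -- the spatial comparison function F
      have hFC2 : ContDiff ℝ 2 (fun y => aa * (∑ k, (u t₀ y k)^2) - bb * φ y) :=
        (contDiff_const.mul hwfunC2).sub (contDiff_const.mul hφC2)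
      have hFmax : IsLocalMax (fun y => aa * (∑ k, (u t₀ y k)^2) - bb * φ y) x₀ := by
        apply Filter.Eventually.of_forall
        intro y
        have h1 : g (t₀, y) ≤ g (t₀, x₀) := hp₁max (t₀, y) ⟨ht₀Icc, mem_univ y⟩
        have h2 : g (t₀, y) = aa * (∑ k, (u t₀ y k)^2) - M^2
            - ε * (Real.exp (μ*(t₀-s)) * (φ y + c)) := rfl
        have h3 : g (t₀, x₀) = aa * (∑ k, (u t₀ x₀ k)^2) - M^2
            - ε * (Real.exp (μ*(t₀-s)) * (φ x₀ + c)) := rfl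
        rw [h2, h3] at h1
        have hby : ε * (Real.exp (μ*(t₀-s)) * (φ y + c)) = bb * φ y + bb * c := by
          rw [hbb]; ring
        have hbx : ε * (Real.exp (μ*(t₀-s)) * (φ x₀ + c)) = bb * φ x₀ + bb * c := by
          rw [hbb]; ring
        show aa * (∑ k, (u t₀ y k)^2) - bb * φ y ≤ aa * (∑ k, (u t₀ x₀ k)^2) - bb * φ x₀
        linarith
      have hpdF : ∀ (y : EuclideanSpace ℝ (Fin d)) (j : Fin d),
          pd (fun z => aa * (∑ k, (u t₀ z k)^2) - bb * φ z) y j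
            = aa * pd (fun z => ∑ k, (u t₀ z k)^2) y j - bb * pd φ y j := by
        intro y j
        have h1 : pd (fun z => aa * (∑ k, (u t₀ z k)^2) - bb * φ z) y j
            = pd (fun z => aa * (∑ k, (u t₀ z k)^2)) y j - pd (fun z => bb * φ z) y j :=
          pd_sub ((hwfunD y).const_mul aa) ((hφD y).const_mul bb)
        have h2 : pd (fun z : EuclideanSpace ℝ (Fin d) => aa * (∑ k, (u t₀ z k)^2)) y j
            = aa * pd (fun z => ∑ k, (u t₀ z k)^2) y j := pd_const_mul (hwfunD y) aa
        have h3 : pd (fun z : EuclideanSpace ℝ (Fin d) => bb * φ z) y j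
            = bb * pd φ y j := pd_const_mul (hφD y) bb
        rw [h1, h2, h3]
      have hF0 : ∀ j : Fin d, aa * pd (fun z => ∑ k, (u t₀ z k)^2) x₀ j = bb * pd φ x₀ j := by
        intro j
        have h0 : fderiv ℝ (fun y => aa * (∑ k, (u t₀ y k)^2) - bb * φ y) x₀ = 0 :=
          hFmax.fderiv_eq_zero
        have h1 : pd (fun z => aa * (∑ k, (u t₀ z k)^2) - bb * φ z) x₀ j = 0 := by
          show fderiv ℝ (fun z => aa * (∑ k, (u t₀ z k)^2) - bb * φ z) x₀
            (EuclideanSpace.single j 1) = 0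
          rw [h0]
          simp
        rw [hpdF x₀ j] at h1
        linarith
      -- divergence comparison
      have hdiv_cmp : aa * (∑ i, ∑ j,
            pd (fun y => q t₀ y i j * pd (fun z => ∑ k, (u t₀ z k)^2) y j) x₀ i)
          ≤ bb * (∑ i, ∑ j, pd (fun y => q t₀ y i j * pd φ y j) x₀ i) := by
        have htr : ∑ i, ∑ j, pd (fun y => q t₀ y i j *
            pd (fun z => aa * (∑ k, (u t₀ z k)^2) - bb * φ z) y j) x₀ i ≤ 0 := by
          have hmain : ∀ i j : Fin d, pd (fun y => q t₀ y i j *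
              pd (fun z => aa * (∑ k, (u t₀ z k)^2) - bb * φ z) y j) x₀ i
              = q t₀ x₀ i j * pd (fun y =>
                  pd (fun z => aa * (∑ k, (u t₀ z k)^2) - bb * φ z) y j) x₀ i := by
            intro i j
            have hpm : pd (fun y => q t₀ y i j *
                pd (fun z => aa * (∑ k, (u t₀ z k)^2) - bb * φ z) y j) x₀ i
                = pd (fun y => q t₀ y i j) x₀ i *
                    pd (fun z => aa * (∑ k, (u t₀ z k)^2) - bb * φ z) x₀ j
                  + q t₀ x₀ i j * pd (fun y =>
                      pd (fun z => aa * (∑ k, (u t₀ z k)^2) - bb * φ z) y j) x₀ i :=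
              pd_mul ((hqD i j) x₀) ((diff_pd hFC2 j) x₀)
            have hz : pd (fun z => aa * (∑ k, (u t₀ z k)^2) - bb * φ z) x₀ j = 0 := by
              rw [hpdF x₀ j, hF0 j, sub_self]
            rw [hpm, hz, mul_zero, zero_add]
          calc ∑ i, ∑ j, pd (fun y => q t₀ y i j *
              pd (fun z => aa * (∑ k, (u t₀ z k)^2) - bb * φ z) y j) x₀ i
              = ∑ i, ∑ j, q t₀ x₀ i j * pd (fun y =>
                  pd (fun z => aa * (∑ k, (u t₀ z k)^2) - bb * φ z) y j) x₀ i :=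
                Finset.sum_congr rfl fun i _ => Finset.sum_congr rfl fun j _ => hmain i j
            _ ≤ 0 := trace_nonpos (q t₀ x₀) hQpd.posSemidef hFC2 hFmax
        have hsplit : ∀ i j : Fin d, pd (fun y => q t₀ y i j *
            pd (fun z => aa * (∑ k, (u t₀ z k)^2) - bb * φ z) y j) x₀ i
            = aa * pd (fun y => q t₀ y i j * pd (fun z => ∑ k, (u t₀ z k)^2) y j) x₀ i
              - bb * pd (fun y => q t₀ y i j * pd φ y j) x₀ i := by
          intro i j
          have hfeq : (fun y => q t₀ y i j *
              pd (fun z => aa * (∑ k, (u t₀ z k)^2) - bb * φ z) y j)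
              = fun y => aa * (q t₀ y i j * pd (fun z => ∑ k, (u t₀ z k)^2) y j)
                  - bb * (q t₀ y i j * pd φ y j) := by
            funext y
            rw [hpdF y j]; ring
          rw [hfeq]
          have e1 : pd (fun y => aa * (q t₀ y i j * pd (fun z => ∑ k, (u t₀ z k)^2) y j)
                - bb * (q t₀ y i j * pd φ y j)) x₀ i
              = pd (fun y => aa * (q t₀ y i j * pd (fun z => ∑ k, (u t₀ z k)^2) y j)) x₀ i
                - pd (fun y => bb * (q t₀ y i j * pd φ y j)) x₀ i :=
            pd_sub ((((hqD i j) x₀).mul ((hpdwD j) x₀)).const_mul aa)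
              ((((hqD i j) x₀).mul ((hpdφD j) x₀)).const_mul bb)
          have e2 : pd (fun y => aa * (q t₀ y i j *
              pd (fun z => ∑ k, (u t₀ z k)^2) y j)) x₀ i
              = aa * pd (fun y => q t₀ y i j * pd (fun z => ∑ k, (u t₀ z k)^2) y j) x₀ i :=
            pd_const_mul (((hqD i j) x₀).mul ((hpdwD j) x₀)) aa
          have e3 : pd (fun y => bb * (q t₀ y i j * pd φ y j)) x₀ i
              = bb * pd (fun y => q t₀ y i j * pd φ y j) x₀ i :=
            pd_const_mul (((hqD i j) x₀).mul ((hpdφD j) x₀)) bb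
          rw [e1, e2, e3]
        have hsum : ∑ i, ∑ j, pd (fun y => q t₀ y i j *
            pd (fun z => aa * (∑ k, (u t₀ z k)^2) - bb * φ z) y j) x₀ i
            = aa * (∑ i, ∑ j,
                pd (fun y => q t₀ y i j * pd (fun z => ∑ k, (u t₀ z k)^2) y j) x₀ i)
              - bb * (∑ i, ∑ j, pd (fun y => q t₀ y i j * pd φ y j) x₀ i) := by
          rw [Finset.mul_sum, Finset.mul_sum, ← Finset.sum_sub_distrib]
          refine Finset.sum_congr rfl fun i _ => ?_
          rw [Finset.mul_sum, Finset.mul_sum, ← Finset.sum_sub_distrib]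
          exact Finset.sum_congr rfl fun j _ => hsplit i j
        linarith [htr, hsum.symm.le, hsum.le]
      -- time derivative at the max point
      have hek : ∀ k : Fin m, HasDerivWithinAt (fun τ => u τ x₀ k)
          ((∑ i, ∑ j, pd (fun y => q t₀ y i j * pd (fun z => u t₀ z k) y j) x₀ i) +
            (∑ i, ∑ l, B i t₀ x₀ k l * pd (fun z => u t₀ z l) x₀ i) +
            ∑ l, C t₀ x₀ k l * u t₀ x₀ l) (Ioc s T) t₀ :=
        fun k => (hasDerivWithinAt_pi.1 (hu_eq t₀ ht₀ x₀)) k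
      have hk2 : ∀ k : Fin m, HasDerivWithinAt (fun τ => (u τ x₀ k)^2)
          (2 * u t₀ x₀ k *
            ((∑ i, ∑ j, pd (fun y => q t₀ y i j * pd (fun z => u t₀ z k) y j) x₀ i) +
              (∑ i, ∑ l, B i t₀ x₀ k l * pd (fun z => u t₀ z l) x₀ i) +
              ∑ l, C t₀ x₀ k l * u t₀ x₀ l)) (Ioc s T) t₀ := by
        intro k
        have h2 := (hek k).pow 2
        norm_num at h2
        exact h2
      have hw' : HasDerivWithinAt (fun τ => ∑ k, (u τ x₀ k)^2)
          (∑ k, 2 * u t₀ x₀ k *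
            ((∑ i, ∑ j, pd (fun y => q t₀ y i j * pd (fun z => u t₀ z k) y j) x₀ i) +
              (∑ i, ∑ l, B i t₀ x₀ k l * pd (fun z => u t₀ z l) x₀ i) +
              ∑ l, C t₀ x₀ k l * u t₀ x₀ l)) (Ioc s T) t₀ :=
        HasDerivWithinAt.fun_sum fun k _ => hk2 k
      have hlin1 : HasDerivWithinAt (fun τ : ℝ => -(2*h₀)*(τ-s)) (-(2*h₀)) (Ioc s T) t₀ := by
        simpa using ((hasDerivWithinAt_id t₀ (Ioc s T)).sub_const s).const_mul (-(2*h₀))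
      have ha' := hlin1.exp
      have hlin2 : HasDerivWithinAt (fun τ : ℝ => μ*(τ-s)) μ (Ioc s T) t₀ := by
        simpa using ((hasDerivWithinAt_id t₀ (Ioc s T)).sub_const s).const_mul μ
      have hb' := hlin2.exp
      have hGd := ((ha'.mul hw').sub_const (M^2)).sub
        ((hb'.mul_const (φ x₀ + c)).const_mul ε)
      have h0le := deriv_nonneg_of_isMaxOn hts ht₀Icc.2 hGd
        (fun τ hτ => hp₁max (τ, x₀) ⟨hτ, mem_univ x₀⟩)
      -- split the time derivative sum
      have hDtwsplit : (∑ k, 2 * u t₀ x₀ k *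
            ((∑ i, ∑ j, pd (fun y => q t₀ y i j * pd (fun z => u t₀ z k) y j) x₀ i) +
              (∑ i, ∑ l, B i t₀ x₀ k l * pd (fun z => u t₀ z l) x₀ i) +
              ∑ l, C t₀ x₀ k l * u t₀ x₀ l))
          = 2*(∑ k, u t₀ x₀ k *
                (∑ i, ∑ j, pd (fun y => q t₀ y i j * pd (fun z => u t₀ z k) y j) x₀ i))
            + 2*(∑ k, u t₀ x₀ k *
                ((∑ i, ∑ l, B i t₀ x₀ k l * pd (fun z => u t₀ z l) x₀ i) +
                  ∑ l, C t₀ x₀ k l * u t₀ x₀ l)) := by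
        rw [Finset.mul_sum, Finset.mul_sum, ← Finset.sum_add_distrib]
        exact Finset.sum_congr rfl fun k _ => by ring
      rw [hDtwsplit] at h0le
      have e15 : 0 ≤ -(2*h₀)*(aa*(∑ k, (u t₀ x₀ k)^2))
          + aa*(2*(∑ k, u t₀ x₀ k *
                (∑ i, ∑ j, pd (fun y => q t₀ y i j * pd (fun z => u t₀ z k) y j) x₀ i))
              + 2*(∑ k, u t₀ x₀ k *
                ((∑ i, ∑ l, B i t₀ x₀ k l * pd (fun z => u t₀ z l) x₀ i) +
                  ∑ l, C t₀ x₀ k l * u t₀ x₀ l)))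
          - μ*bb*(φ x₀+c) := by
        have hval : Real.exp (-(2 * h₀) * (t₀ - s)) * -(2 * h₀) * (∑ k, (u t₀ x₀ k)^2) +
              Real.exp (-(2 * h₀) * (t₀ - s)) *
                (2*(∑ k, u t₀ x₀ k *
                    (∑ i, ∑ j, pd (fun y => q t₀ y i j * pd (fun z => u t₀ z k) y j) x₀ i))
                  + 2*(∑ k, u t₀ x₀ k *
                    ((∑ i, ∑ l, B i t₀ x₀ k l * pd (fun z => u t₀ z l) x₀ i) +
                      ∑ l, C t₀ x₀ k l * u t₀ x₀ l)))
              - ε * (Real.exp (μ * (t₀ - s)) * μ * (φ x₀ + c))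
            = -(2*h₀)*(aa*(∑ k, (u t₀ x₀ k)^2))
              + aa*(2*(∑ k, u t₀ x₀ k *
                    (∑ i, ∑ j, pd (fun y => q t₀ y i j * pd (fun z => u t₀ z k) y j) x₀ i))
                  + 2*(∑ k, u t₀ x₀ k *
                    ((∑ i, ∑ l, B i t₀ x₀ k l * pd (fun z => u t₀ z l) x₀ i) +
                      ∑ l, C t₀ x₀ k l * u t₀ x₀ l)))
              - μ*bb*(φ x₀+c) := by
          rw [haa, hbb]; ring
        linarith [h0le, hval.le, hval.ge]
      -- the divergence identity
      have e12 : (∑ i, ∑ j, pd (fun y => q t₀ y i j * pd (fun z => ∑ k, (u t₀ z k)^2) y j) x₀ i)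
          = 2*(∑ k, u t₀ x₀ k *
                (∑ i, ∑ j, pd (fun y => q t₀ y i j * pd (fun z => u t₀ z k) y j) x₀ i))
            + 2*(∑ i, ∑ j, q t₀ x₀ i j *
                (∑ k, pd (fun z => u t₀ z k) x₀ i * pd (fun z => u t₀ z k) x₀ j)) := by
        have hterm : ∀ i j : Fin d,
            pd (fun y => q t₀ y i j * pd (fun z => ∑ k, (u t₀ z k)^2) y j) x₀ i
            = (∑ k, 2 * (pd (fun z => u t₀ z k) x₀ i *
                  (q t₀ x₀ i j * pd (fun z => u t₀ z k) x₀ j)))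
              + ∑ k, 2 * (u t₀ x₀ k *
                  pd (fun y => q t₀ y i j * pd (fun z => u t₀ z k) y j) x₀ i) := by
          intro i j
          have hfeq : (fun y => q t₀ y i j * pd (fun z => ∑ k, (u t₀ z k)^2) y j)
              = fun y => ∑ k, 2 * (u t₀ y k * (q t₀ y i j * pd (fun z => u t₀ z k) y j)) := by
            funext y
            rw [hpdw y j, Finset.mul_sum]
            exact Finset.sum_congr rfl fun k _ => by ring
          rw [hfeq]
          have h1 : pd (fun y => ∑ k, 2 * (u t₀ y k *
                (q t₀ y i j * pd (fun z => u t₀ z k) y j))) x₀ i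
              = ∑ k, pd (fun y => 2 * (u t₀ y k *
                (q t₀ y i j * pd (fun z => u t₀ z k) y j))) x₀ i :=
            pd_sum Finset.univ
              (fun k y => 2 * (u t₀ y k * (q t₀ y i j * pd (fun z => u t₀ z k) y j)))
              (fun k _ => (((hukD k) x₀).mul
                (((hqD i j) x₀).mul ((hpdukD k j) x₀))).const_mul 2)
          rw [h1, ← Finset.sum_add_distrib]
          refine Finset.sum_congr rfl fun k _ => ?_
          have h2 : pd (fun y => 2 * (u t₀ y k *
                (q t₀ y i j * pd (fun z => u t₀ z k) y j))) x₀ i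
              = 2 * pd (fun y => u t₀ y k *
                (q t₀ y i j * pd (fun z => u t₀ z k) y j)) x₀ i :=
            pd_const_mul (((hukD k) x₀).mul
              (((hqD i j) x₀).mul ((hpdukD k j) x₀))) 2
          have h3 : pd (fun y => u t₀ y k *
                (q t₀ y i j * pd (fun z => u t₀ z k) y j)) x₀ i
              = pd (fun y => u t₀ y k) x₀ i *
                  (q t₀ x₀ i j * pd (fun z => u t₀ z k) x₀ j)
                + u t₀ x₀ k * pd (fun y => q t₀ y i j *
                    pd (fun z => u t₀ z k) y j) x₀ i :=
            pd_mul ((hukD k) x₀) (((hqD i j) x₀).mul ((hpdukD k j) x₀))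
          rw [h2, h3]
          ring
        have hA : (∑ i, ∑ j, ∑ k, 2 * (pd (fun z => u t₀ z k) x₀ i *
              (q t₀ x₀ i j * pd (fun z => u t₀ z k) x₀ j)))
            = 2*(∑ i, ∑ j, q t₀ x₀ i j *
                (∑ k, pd (fun z => u t₀ z k) x₀ i * pd (fun z => u t₀ z k) x₀ j)) := by
          simp only [Finset.mul_sum]
          exact Finset.sum_congr rfl fun i _ => Finset.sum_congr rfl fun j _ =>
            Finset.sum_congr rfl fun k _ => by ring
        have hB : (∑ i, ∑ j, ∑ k, 2 * (u t₀ x₀ k *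
              pd (fun y => q t₀ y i j * pd (fun z => u t₀ z k) y j) x₀ i))
            = 2*(∑ k, u t₀ x₀ k *
                (∑ i, ∑ j, pd (fun y => q t₀ y i j * pd (fun z => u t₀ z k) y j) x₀ i)) := by
          rw [show (∑ i, ∑ j, ∑ k, 2 * (u t₀ x₀ k *
              pd (fun y => q t₀ y i j * pd (fun z => u t₀ z k) y j) x₀ i))
              = ∑ k, ∑ i, ∑ j, 2 * (u t₀ x₀ k *
                pd (fun y => q t₀ y i j * pd (fun z => u t₀ z k) y j) x₀ i) from
            (Finset.sum_congr rfl fun i _ => Finset.sum_comm).trans Finset.sum_comm]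
          simp only [Finset.mul_sum]
        calc (∑ i, ∑ j, pd (fun y => q t₀ y i j * pd (fun z => ∑ k, (u t₀ z k)^2) y j) x₀ i)
            = ∑ i, ∑ j, ((∑ k, 2 * (pd (fun z => u t₀ z k) x₀ i *
                  (q t₀ x₀ i j * pd (fun z => u t₀ z k) x₀ j)))
                + ∑ k, 2 * (u t₀ x₀ k *
                  pd (fun y => q t₀ y i j * pd (fun z => u t₀ z k) y j) x₀ i)) :=
              Finset.sum_congr rfl fun i _ => Finset.sum_congr rfl fun j _ => hterm i j
          _ = (∑ i, ∑ j, ∑ k, 2 * (pd (fun z => u t₀ z k) x₀ i *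
                  (q t₀ x₀ i j * pd (fun z => u t₀ z k) x₀ j)))
              + ∑ i, ∑ j, ∑ k, 2 * (u t₀ x₀ k *
                  pd (fun y => q t₀ y i j * pd (fun z => u t₀ z k) y j) x₀ i) := by
              rw [← Finset.sum_add_distrib]
              exact Finset.sum_congr rfl fun i _ => by rw [← Finset.sum_add_distrib]
          _ = _ := by
              rw [hA, hB]
              exact add_comm _ _
      -- rewrite the first-order term via symmetry of B
      have hT10eq : (∑ k, u t₀ x₀ k *
            ((∑ i, ∑ l, B i t₀ x₀ k l * pd (fun z => u t₀ z l) x₀ i) +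
              ∑ l, C t₀ x₀ k l * u t₀ x₀ l))
          = (∑ i, ∑ k, pd (fun z => u t₀ z k) x₀ i * (∑ l, B i t₀ x₀ k l * u t₀ x₀ l))
            + ∑ k, (∑ l, C t₀ x₀ k l * u t₀ x₀ l) * u t₀ x₀ k := by
        have hsplit : (∑ k, u t₀ x₀ k *
              ((∑ i, ∑ l, B i t₀ x₀ k l * pd (fun z => u t₀ z l) x₀ i) +
                ∑ l, C t₀ x₀ k l * u t₀ x₀ l))
            = (∑ k, u t₀ x₀ k * (∑ i, ∑ l, B i t₀ x₀ k l * pd (fun z => u t₀ z l) x₀ i))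
              + ∑ k, u t₀ x₀ k * (∑ l, C t₀ x₀ k l * u t₀ x₀ l) := by
          rw [← Finset.sum_add_distrib]
          exact Finset.sum_congr rfl fun k _ => by ring
        have hflip : (∑ k, u t₀ x₀ k *
              (∑ i, ∑ l, B i t₀ x₀ k l * pd (fun z => u t₀ z l) x₀ i))
            = ∑ i, ∑ l, pd (fun z => u t₀ z l) x₀ i *
                (∑ k, B i t₀ x₀ l k * u t₀ x₀ k) := by
          calc (∑ k, u t₀ x₀ k *
                (∑ i, ∑ l, B i t₀ x₀ k l * pd (fun z => u t₀ z l) x₀ i))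
              = ∑ k, ∑ i, ∑ l, u t₀ x₀ k *
                  (B i t₀ x₀ k l * pd (fun z => u t₀ z l) x₀ i) := by
                refine Finset.sum_congr rfl fun k _ => ?_
                simp only [Finset.mul_sum]
            _ = ∑ i, ∑ k, ∑ l, u t₀ x₀ k *
                  (B i t₀ x₀ k l * pd (fun z => u t₀ z l) x₀ i) := Finset.sum_comm
            _ = ∑ i, ∑ l, ∑ k, u t₀ x₀ k *
                  (B i t₀ x₀ k l * pd (fun z => u t₀ z l) x₀ i) :=
                Finset.sum_congr rfl fun i _ => Finset.sum_comm
            _ = ∑ i, ∑ l, pd (fun z => u t₀ z l) x₀ i *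
                  (∑ k, B i t₀ x₀ l k * u t₀ x₀ k) := by
                refine Finset.sum_congr rfl fun i _ => Finset.sum_congr rfl fun l _ => ?_
                rw [Finset.mul_sum]
                refine Finset.sum_congr rfl fun k _ => ?_
                rw [(hB_symm i t₀ ht₀I x₀).apply k l]
                ring
        have hPC : (∑ k, u t₀ x₀ k * (∑ l, C t₀ x₀ k l * u t₀ x₀ l))
            = ∑ k, (∑ l, C t₀ x₀ k l * u t₀ x₀ l) * u t₀ x₀ k :=
          Finset.sum_congr rfl fun k _ => mul_comm _ _
        rw [hsplit, hflip, hPC]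
      -- conversions between η-sums and plain sums
      have hBconv : ∀ (i : Fin d) (k : Fin m),
          (∑ l, B i t₀ x₀ k l * (u t₀ x₀ l / sw))
            = (∑ l, B i t₀ x₀ k l * u t₀ x₀ l) / sw := by
        intro i k
        rw [Finset.sum_div]
        exact Finset.sum_congr rfl fun l _ => by ring
      have hCconv' : ∀ k : Fin m, (∑ l, C t₀ x₀ k l * (u t₀ x₀ l / sw))
            = (∑ l, C t₀ x₀ k l * u t₀ x₀ l) / sw := by
        intro k
        rw [Finset.sum_div]
        exact Finset.sum_congr rfl fun l _ => by ring
      have hXconv : ∀ i : Fin d,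
          (∑ k, (∑ l, B i t₀ x₀ k l * (u t₀ x₀ l / sw)) * (u t₀ x₀ k / sw))
            = (∑ k, (∑ l, B i t₀ x₀ k l * u t₀ x₀ l) * u t₀ x₀ k)
                / (∑ k, (u t₀ x₀ k)^2) := by
        intro i
        rw [Finset.sum_div]
        refine Finset.sum_congr rfl fun k _ => ?_
        rw [hBconv i k, div_mul_div_comm, hsw2]
      have hYconv : ∀ i j : Fin d,
          (∑ k, (∑ l, B i t₀ x₀ k l * (u t₀ x₀ l / sw)) *
              (∑ l, B j t₀ x₀ k l * (u t₀ x₀ l / sw)))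
            = (∑ k, (∑ l, B i t₀ x₀ k l * u t₀ x₀ l) *
                (∑ l, B j t₀ x₀ k l * u t₀ x₀ l)) / (∑ k, (u t₀ x₀ k)^2) := by
        intro i j
        rw [Finset.sum_div]
        refine Finset.sum_congr rfl fun k _ => ?_
        rw [hBconv i k, hBconv j k, div_mul_div_comm, hsw2]
      have hCconv : (∑ k, (∑ l, C t₀ x₀ k l * (u t₀ x₀ l / sw)) * (u t₀ x₀ k / sw))
            = (∑ k, (∑ l, C t₀ x₀ k l * u t₀ x₀ l) * u t₀ x₀ k)
                / (∑ k, (u t₀ x₀ k)^2) := by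
        rw [Finset.sum_div]
        refine Finset.sum_congr rfl fun k _ => ?_
        rw [hCconv' k, div_mul_div_comm, hsw2]
      -- instantiate the Kη hypothesis
      have hKi : 0 ≤ (∑ i, ∑ j, (q t₀ x₀)⁻¹ i j *
          ((∑ k, (∑ l, B i t₀ x₀ k l * (u t₀ x₀ l / sw)) * (u t₀ x₀ k / sw)) *
            (∑ k, (∑ l, B j t₀ x₀ k l * (u t₀ x₀ l / sw)) * (u t₀ x₀ k / sw)) -
           ∑ k, (∑ l, B i t₀ x₀ k l * (u t₀ x₀ l / sw)) *
             (∑ l, B j t₀ x₀ k l * (u t₀ x₀ l / sw)))) -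
          4 * (∑ k, (∑ l, C t₀ x₀ k l * (u t₀ x₀ l / sw)) * (u t₀ x₀ k / sw)) +
          4 * h t₀ x₀ :=
        hKeta (fun k => u t₀ x₀ k / sw) hηunit t₀ ht₀I x₀
      have hKmain : (∑ i, ∑ j, (q t₀ x₀)⁻¹ i j *
          ((∑ k, (∑ l, B i t₀ x₀ k l * (u t₀ x₀ l / sw)) * (u t₀ x₀ k / sw)) *
            (∑ k, (∑ l, B j t₀ x₀ k l * (u t₀ x₀ l / sw)) * (u t₀ x₀ k / sw)) -
           ∑ k, (∑ l, B i t₀ x₀ k l * (u t₀ x₀ l / sw)) *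
             (∑ l, B j t₀ x₀ k l * (u t₀ x₀ l / sw))))
          = ∑ i, ∑ j, (q t₀ x₀)⁻¹ i j *
            ((∑ k, (∑ l, B i t₀ x₀ k l * u t₀ x₀ l) * u t₀ x₀ k) / (∑ k, (u t₀ x₀ k)^2) *
              ((∑ k, (∑ l, B j t₀ x₀ k l * u t₀ x₀ l) * u t₀ x₀ k) / (∑ k, (u t₀ x₀ k)^2)) -
             (∑ k, (∑ l, B i t₀ x₀ k l * u t₀ x₀ l) *
               (∑ l, B j t₀ x₀ k l * u t₀ x₀ l)) / (∑ k, (u t₀ x₀ k)^2)) :=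
        Finset.sum_congr rfl fun i _ => Finset.sum_congr rfl fun j _ => by
          rw [hXconv i, hXconv j, hYconv i j]
      rw [hKmain, hCconv] at hKi
      -- apply the core algebraic estimate
      have h13 : 2*(∑ i, ∑ k, pd (fun z => u t₀ z k) x₀ i *
            (∑ l, B i t₀ x₀ k l * u t₀ x₀ l))
          + 2*(∑ k, (∑ l, C t₀ x₀ k l * u t₀ x₀ l) * u t₀ x₀ k)
          ≤ 2*(∑ i, ∑ j, q t₀ x₀ i j *
              (∑ k, pd (fun z => u t₀ z k) x₀ i * pd (fun z => u t₀ z k) x₀ j))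
            + (∑ i, ((∑ k, (∑ l, B i t₀ x₀ k l * u t₀ x₀ l) * u t₀ x₀ k) /
                (∑ k, (u t₀ x₀ k)^2)) *
                (∑ k, 2 * u t₀ x₀ k * pd (fun z => u t₀ z k) x₀ i))
            + 2*h t₀ x₀*(∑ k, (u t₀ x₀ k)^2) :=
        keta_core (q t₀ x₀) hQsym hQpd
          (fun i k => pd (fun z => u t₀ z k) x₀ i)
          (fun i k => ∑ l, B i t₀ x₀ k l * u t₀ x₀ l)
          (fun k => u t₀ x₀ k) (∑ k, (u t₀ x₀ k)^2) rfl hw₀pos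
          (∑ k, (∑ l, C t₀ x₀ k l * u t₀ x₀ l) * u t₀ x₀ k) (h t₀ x₀) hKi
      have hmid : (∑ i, ((∑ k, (∑ l, B i t₀ x₀ k l * u t₀ x₀ l) * u t₀ x₀ k) /
              (∑ k, (u t₀ x₀ k)^2)) *
              (∑ k, 2 * u t₀ x₀ k * pd (fun z => u t₀ z k) x₀ i))
          = ∑ i, ((∑ k, (∑ l, B i t₀ x₀ k l * u t₀ x₀ l) * u t₀ x₀ k) /
              (∑ k, (u t₀ x₀ k)^2)) * pd (fun z => ∑ k, (u t₀ z k)^2) x₀ i :=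
        Finset.sum_congr rfl fun i _ => by rw [hpdw x₀ i]
      rw [hmid] at h13
      have e13 : 2*(∑ k, u t₀ x₀ k *
            ((∑ i, ∑ l, B i t₀ x₀ k l * pd (fun z => u t₀ z l) x₀ i) +
              ∑ l, C t₀ x₀ k l * u t₀ x₀ l))
          ≤ 2*(∑ i, ∑ j, q t₀ x₀ i j *
              (∑ k, pd (fun z => u t₀ z k) x₀ i * pd (fun z => u t₀ z k) x₀ j))
            + (∑ i, ((∑ k, (∑ l, B i t₀ x₀ k l * u t₀ x₀ l) * u t₀ x₀ k) /
                (∑ k, (u t₀ x₀ k)^2)) * pd (fun z => ∑ k, (u t₀ z k)^2) x₀ i)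
            + 2*h t₀ x₀*(∑ k, (u t₀ x₀ k)^2) := by
        rw [hT10eq]
        linarith [h13]
      -- the Lyapunov estimate
      have h14 : (∑ i, ∑ j, pd (fun y => q t₀ y i j * pd φ y j) x₀ i) +
            (∑ i, (∑ k, (∑ l, B i t₀ x₀ k l * (u t₀ x₀ l / sw)) * (u t₀ x₀ k / sw)) *
              pd φ x₀ i) + 2 * h t₀ x₀ * φ x₀ - lam * φ x₀ ≤ K :=
        hKest (fun k => u t₀ x₀ k / sw) hηunit t₀ ht₀Icc x₀
      have hBDφ : (∑ i, (∑ k, (∑ l, B i t₀ x₀ k l * (u t₀ x₀ l / sw)) * (u t₀ x₀ k / sw)) *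
              pd φ x₀ i)
          = ∑ i, ((∑ k, (∑ l, B i t₀ x₀ k l * u t₀ x₀ l) * u t₀ x₀ k) /
              (∑ k, (u t₀ x₀ k)^2)) * pd φ x₀ i :=
        Finset.sum_congr rfl fun i _ => by rw [hXconv i]
      rw [hBDφ] at h14
      -- gradient identity
      have e9 : aa * (∑ i, ((∑ k, (∑ l, B i t₀ x₀ k l * u t₀ x₀ l) * u t₀ x₀ k) /
              (∑ k, (u t₀ x₀ k)^2)) * pd (fun z => ∑ k, (u t₀ z k)^2) x₀ i)
          = bb * (∑ i, ((∑ k, (∑ l, B i t₀ x₀ k l * u t₀ x₀ l) * u t₀ x₀ k) /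
              (∑ k, (u t₀ x₀ k)^2)) * pd φ x₀ i) := by
        rw [Finset.mul_sum, Finset.mul_sum]
        refine Finset.sum_congr rfl fun i _ => ?_
        have hi := hF0 i
        calc aa * (((∑ k, (∑ l, B i t₀ x₀ k l * u t₀ x₀ l) * u t₀ x₀ k) /
              (∑ k, (u t₀ x₀ k)^2)) * pd (fun z => ∑ k, (u t₀ z k)^2) x₀ i)
            = ((∑ k, (∑ l, B i t₀ x₀ k l * u t₀ x₀ l) * u t₀ x₀ k) /
              (∑ k, (u t₀ x₀ k)^2)) * (aa * pd (fun z => ∑ k, (u t₀ z k)^2) x₀ i) := by ring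
          _ = ((∑ k, (∑ l, B i t₀ x₀ k l * u t₀ x₀ l) * u t₀ x₀ k) /
              (∑ k, (u t₀ x₀ k)^2)) * (bb * pd φ x₀ i) := by rw [hi]
          _ = bb * (((∑ k, (∑ l, B i t₀ x₀ k l * u t₀ x₀ l) * u t₀ x₀ k) /
              (∑ k, (u t₀ x₀ k)^2)) * pd φ x₀ i) := by ring
      exact final_arith aa bb (∑ k, (u t₀ x₀ k)^2) (M^2) (φ x₀) c K lam μ (h t₀ x₀) h₀
        (∑ i, ∑ j, pd (fun y => q t₀ y i j * pd (fun z => ∑ k, (u t₀ z k)^2) y j) x₀ i)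
        (∑ i, ∑ j, pd (fun y => q t₀ y i j * pd φ y j) x₀ i)
        (∑ i, ((∑ k, (∑ l, B i t₀ x₀ k l * u t₀ x₀ l) * u t₀ x₀ k) /
            (∑ k, (u t₀ x₀ k)^2)) * pd (fun z => ∑ k, (u t₀ z k)^2) x₀ i)
        (∑ i, ((∑ k, (∑ l, B i t₀ x₀ k l * u t₀ x₀ l) * u t₀ x₀ k) /
            (∑ k, (u t₀ x₀ k)^2)) * pd φ x₀ i)
        (∑ i, ∑ j, q t₀ x₀ i j *
            (∑ k, pd (fun z => u t₀ z k) x₀ i * pd (fun z => u t₀ z k) x₀ j))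
        (∑ k, u t₀ x₀ k *
            (∑ i, ∑ j, pd (fun y => q t₀ y i j * pd (fun z => u t₀ z k) y j) x₀ i))
        (∑ k, u t₀ x₀ k *
            ((∑ i, ∑ l, B i t₀ x₀ k l * pd (fun z => u t₀ z l) x₀ i) +
              ∑ l, C t₀ x₀ k l * u t₀ x₀ l))
        haapos hbbpos (hφpos x₀) hc0.le (sq_nonneg M) (hh₀ t₀ ht₀I x₀) hμ1 hμc
        e12 e13 hdiv_cmp e9 h14 e15 hgp1




    intro p hp
    exact le_trans (hp₁max p hp) hfin

  -- conclude
  have ht' : t ∈ Icc s T := ⟨ht.1.le, ht.2⟩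
  have hwle : ∀ ε : ℝ, 0 < ε →
      Real.exp (-(2*h₀)*(t-s)) * (∑ k, (u t x k)^2) ≤ M^2 + ε := by
    intro ε hε
    have hC₀pos : 0 < Real.exp (μ*(t-s)) * (φ x + c) := by
      have := hφpos x
      positivity
    have h1 : Real.exp (-(2*h₀)*(t-s)) * (∑ k, (u t x k)^2) - M^2
        - (ε / (Real.exp (μ*(t-s)) * (φ x + c))) * (Real.exp (μ*(t-s)) * (φ x + c)) ≤ 0 :=
      main (ε / (Real.exp (μ*(t-s)) * (φ x + c))) (div_pos hε hC₀pos)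
        (t, x) ⟨ht', mem_univ x⟩
    have h2 : ε / (Real.exp (μ*(t-s)) * (φ x + c)) * (Real.exp (μ*(t-s)) * (φ x + c)) = ε := by
      exact div_mul_cancel₀ ε hC₀pos.ne'
    linarith [h1, h2.le, h2.ge]
  have hwM : Real.exp (-(2*h₀)*(t-s)) * (∑ k, (u t x k)^2) ≤ M^2 := by
    by_contra hcon
    push_neg at hcon
    have := hwle ((Real.exp (-(2*h₀)*(t-s)) * (∑ k, (u t x k)^2) - M^2)/2) (by linarith)
    linarith
  have hkey : ∑ k, (u t x k)^2 ≤ (Real.exp (h₀*(t-s)) * M)^2 := by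
    have e3 : Real.exp (-(2*h₀)*(t-s)) * Real.exp (2*h₀*(t-s)) = 1 := by
      rw [← Real.exp_add]
      norm_num
    have e2 : (Real.exp (h₀*(t-s)) * M)^2 = Real.exp (2*h₀*(t-s)) * M^2 := by
      rw [mul_pow]
      congr 1
      rw [pow_two, ← Real.exp_add]
      congr 1
      ring
    have e1 : (0:ℝ) < Real.exp (-(2*h₀)*(t-s)) := Real.exp_pos _
    have e4 : (0:ℝ) < Real.exp (2*h₀*(t-s)) := Real.exp_pos _
    rw [e2]
    nlinarith [hwM]
  calc Real.sqrt (∑ k, (u t x k)^2)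
      ≤ Real.sqrt ((Real.exp (h₀*(t-s)) * M)^2) := Real.sqrt_le_sqrt hkey
    _ = Real.exp (h₀*(t-s)) * M := Real.sqrt_sq (by positivity)
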